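/- Let γ = ((i₁ j₁),…,(i_k j_k)) ∈ Σ_n(k) and let l ∈ {1,…,k}. If i_l + 1 ∉ {i₁,…,i_{l−1}}, then C_{γ_{l−1}}(i_l + 1) = {i_l + 1}, i.e. i_l + 1 is a fixed point of γ_{l−1}. -/

import Mathlib

/-!
Extend `γ` by a minimal factorization of `γ⁻¹ c` to a factorization of the long cycle `c` into
`n - 1` transpositions. In such a chain every step merges two cycles, and the property of `c`
that every cycle is cyclically increasing and no two cycles cross is inherited by every prefix,
going backwards from `c`. If `γ_{l-1}` moved `x = i_l + 1`, then some earlier `(i_t j_t)` moved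
`x`, necessarily with `x = j_t`, so `x` shares its cycle with the smaller `i_t`. Where that cycle
sits relative to the merge of the cycles of `i_l` and `j_l` at step `l` then contradicts either
monotonicity (`x` would follow `i_l` in `γ_l`) or noncrossing.
-/

/-- ℓ(σ): the number of cycles (orbits) of σ, including fixed points, counted via the
minimal representative of each orbit. -/
noncomputable def cycleCount {n : ℕ} (σ : Equiv.Perm (Fin n)) : ℕ :=
  Set.ncard {x : Fin n | ∀ y, σ.SameCycle x y → x ≤ y}

/-- |σ| := n − ℓ(σ). -/
noncomputable def normPerm {n : ℕ} (σ : Equiv.Perm (Fin n)) : ℕ := n - cycleCount σ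

/-- σ₁ ≼ σ₂ iff |σ₂| = |σ₁| + |σ₁⁻¹σ₂|. -/
def precLe {n : ℕ} (σ₁ σ₂ : Equiv.Perm (Fin n)) : Prop :=
  normPerm σ₂ = normPerm σ₁ + normPerm (σ₁⁻¹ * σ₂)

/-- Σ_n(k): tuples of k transpositions with |τ₁⋯τ_k| = k and τ₁⋯τ_k ≼ (1 … n). -/
def SigmaSet (n k : ℕ) : Set (Fin k → Equiv.Perm (Fin n)) :=
  {τ | (∀ l, (τ l).IsSwap) ∧ normPerm (List.ofFn τ).prod = k ∧
      precLe (List.ofFn τ).prod (finRotate n)}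

/-- γ_m := τ₁∘⋯∘τ_m, the product of the first m entries of the chain. -/
def gammaP {n k : ℕ} (τ : Fin k → Equiv.Perm (Fin n)) (m : ℕ) : Equiv.Perm (Fin n) :=
  ((List.ofFn τ).take m).prod

open Equiv Equiv.Perm

theorem exists_mem_apply_ne_of_prod_apply_ne {α : Type*} {L : List (Perm α)} {x : α}
    (h : L.prod x ≠ x) : ∃ τ ∈ L, τ x ≠ x := by
  by_contra! hL
  exact h ((MulAction.stabilizer (Perm α) x).list_prod_mem fun τ hτ => hL τ hτ)

section JoinPair

variable {α : Type*} {r : α → α → Prop} {a b x y : α}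

def joinPair (r : α → α → Prop) (a b x y : α) : Prop :=
  r x y ∨ (r x a ∨ r x b) ∧ (r y a ∨ r y b)

theorem Equivalence.joinPair (hr : Equivalence r) (a b : α) : Equivalence (joinPair r a b) where
  refl x := Or.inl (hr.refl x)
  symm := by
    rintro x y (h | ⟨hx, hy⟩)
    exacts [Or.inl (hr.symm h), Or.inr ⟨hy, hx⟩]
  trans := by
    rintro x y z (h | ⟨hx, hy⟩) (h' | ⟨hy', hz⟩)
    · exact Or.inl (hr.trans h h')
    · exact Or.inr ⟨hy'.imp (hr.trans h) (hr.trans h), hz⟩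
    · exact Or.inr ⟨hx, hy.imp (hr.trans (hr.symm h')) (hr.trans (hr.symm h'))⟩
    · exact Or.inr ⟨hx, hz⟩

theorem joinPair_comm : joinPair r a b x y ↔ joinPair r b a x y := by
  unfold joinPair
  tauto

theorem joinPair_iff_of_rel (hr : Equivalence r) (hab : r a b) : joinPair r a b x y ↔ r x y := by
  refine ⟨?_, Or.inl⟩
  rintro (h | ⟨hx, hy⟩)
  · exact h
  · have hxa : r x a := hx.elim id fun h => hr.trans h (hr.symm hab)
    have hya : r y a := hy.elim id fun h => hr.trans h (hr.symm hab)
    exact hr.trans hxa (hr.symm hya)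

theorem joinPair_swap_apply [DecidableEq α] (hr : Equivalence r) (x : α) :
    joinPair r a b x (swap a b x) := by
  rcases eq_or_ne x a with rfl | hxa
  · rw [swap_apply_left]
    exact Or.inr ⟨Or.inl (hr.refl x), Or.inr (hr.refl b)⟩
  rcases eq_or_ne x b with rfl | hxb
  · rw [swap_apply_right]
    exact Or.inr ⟨Or.inr (hr.refl x), Or.inl (hr.refl a)⟩
  rw [swap_apply_of_ne_of_ne hxa hxb]
  exact Or.inl (hr.refl x)

end JoinPair

section MinReps

variable {α : Type*} [LinearOrder α] {r s : α → α → Prop}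

/-- For an equivalence relation on a finite linear order, `(minReps r).ncard` is the number of
classes; `cycleCount σ` is `(minReps σ.SameCycle).ncard`. -/
def minReps (r : α → α → Prop) : Set α := {x | ∀ y, r x y → x ≤ y}

theorem minReps_subset (h : ∀ x y, r x y → s x y) : minReps s ⊆ minReps r :=
  fun x hx y hxy => hx y (h x y hxy)

theorem eq_of_mem_minReps (hr : Equivalence r) {m m' : α} (hm : m ∈ minReps r)
    (hm' : m' ∈ minReps r) (h : r m m') : m = m' :=
  le_antisymm (hm m' h) (hm' m (hr.symm h))

variable [Finite α]

theorem exists_mem_minReps (hr : Equivalence r) (u : α) : ∃ m ∈ minReps r, r u m := by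
  obtain ⟨m, hum, hmin⟩ := wellFounded_lt.has_min {y | r u y} ⟨u, hr.refl u⟩
  exact ⟨m, fun y hmy => not_lt.1 fun hlt => hmin y (hr.trans hum hmy) hlt, hum⟩

theorem ncard_minReps_le (h : ∀ x y, r x y → s x y) : (minReps s).ncard ≤ (minReps r).ncard :=
  Set.ncard_le_ncard (minReps_subset h)

theorem ncard_minReps_lt (hr : Equivalence r) (hs : Equivalence s) (h : ∀ x y, r x y → s x y)
    {u v : α} (huv : s u v) (hn : ¬ r u v) : (minReps s).ncard < (minReps r).ncard := by
  obtain ⟨mu, hmu, hu⟩ := exists_mem_minReps hr u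
  obtain ⟨mv, hmv, hv⟩ := exists_mem_minReps hr v
  have hne : mu ≠ mv := by
    rintro rfl
    exact hn (hr.trans hu (hr.symm hv))
  have hs' : s mu mv := hs.trans (hs.trans (hs.symm (h _ _ hu)) huv) (h _ _ hv)
  have hnot : mu ∉ minReps s ∨ mv ∉ minReps s := by
    by_contra! hboth
    exact hne (eq_of_mem_minReps hs hboth.1 hboth.2 hs')
  refine Set.ncard_lt_ncard ((Set.ssubset_iff_of_subset (minReps_subset h)).2 ?_)
  rcases hnot with h' | h'
  exacts [⟨mu, hmu, h'⟩, ⟨mv, hmv, h'⟩]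

theorem ncard_minReps_le_joinPair (hr : Equivalence r) (a b : α) :
    (minReps r).ncard ≤ (minReps (joinPair r a b)).ncard + 1 := by
  obtain ⟨ma, hma, ha⟩ := exists_mem_minReps hr a
  obtain ⟨mb, hmb, hb⟩ := exists_mem_minReps hr b
  have hsub : minReps r ⊆ insert (max ma mb) (minReps (joinPair r a b)) := by
    intro x hx
    refine or_iff_not_imp_left.2 fun hxmax y hxy => ?_
    rcases hxy with hxy | ⟨hxAB, hyAB⟩
    · exact hx y hxy
    -- `x` is the representative of the class of `a` or of `b`, and not the larger one
    have hxle : x ≤ ma ∧ x ≤ mb := by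
      rcases hxAB with hxa | hxb
      · obtain rfl := eq_of_mem_minReps hr hx hma (hr.trans hxa ha)
        exact ⟨le_rfl, le_of_not_gt fun h => hxmax (max_eq_left h.le).symm⟩
      · obtain rfl := eq_of_mem_minReps hr hx hmb (hr.trans hxb hb)
        exact ⟨le_of_not_gt fun h => hxmax (max_eq_right h.le).symm, le_rfl⟩
    rcases hyAB with hya | hyb
    · exact hxle.1.trans (hma y (hr.trans (hr.symm ha) (hr.symm hya)))
    · exact hxle.2.trans (hmb y (hr.trans (hr.symm hb) (hr.symm hyb)))
  exact (Set.ncard_le_ncard hsub).trans (Set.ncard_insert_le _ _)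

end MinReps

section Merge

variable {α : Type*} [DecidableEq α] {σ : Perm α} {a b x y : α}

theorem sameCycle_mul_swap_imp_joinPair [Finite α] (h : (σ * swap a b).SameCycle x y) :
    joinPair σ.SameCycle a b x y := by
  have hJ := (SameCycle.equivalence σ).joinPair a b
  obtain ⟨i, rfl⟩ := h.exists_nat_pow_eq
  clear h
  induction i with
  | zero => exact hJ.refl x
  | succ i ih =>
    rw [pow_succ', mul_apply, mul_apply]
    refine hJ.trans ih (hJ.trans (joinPair_swap_apply (SameCycle.equivalence σ) _) (Or.inl ?_))
    exact sameCycle_apply_right.2 (SameCycle.refl _ _)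

def IsMerge (σ : Perm α) (a b : α) : Prop :=
  ¬ σ.SameCycle a b ∧ ∀ x y, (σ * swap a b).SameCycle x y ↔ joinPair σ.SameCycle a b x y

namespace IsMerge

theorem symm (h : IsMerge σ a b) : IsMerge σ b a :=
  ⟨fun hba => h.1 hba.symm, fun x y => by rw [swap_comm, h.2, joinPair_comm]⟩

theorem sameCycle_mul_swap (h : IsMerge σ a b) (hxy : σ.SameCycle x y) :
    (σ * swap a b).SameCycle x y :=
  (h.2 x y).2 (Or.inl hxy)

theorem sameCycle_swap_apply (h : IsMerge σ a b) (x : α) :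
    (σ * swap a b).SameCycle x (swap a b x) :=
  (h.2 _ _).2 (joinPair_swap_apply (SameCycle.equivalence σ) x)

end IsMerge

end Merge

section CycleCount

variable {n : ℕ} {σ : Perm (Fin n)}

theorem cycleCount_eq_ncard_minReps (σ : Perm (Fin n)) :
    cycleCount σ = (minReps σ.SameCycle).ncard := rfl

theorem cycleCount_le (σ : Perm (Fin n)) : cycleCount σ ≤ n := by
  simpa [cycleCount_eq_ncard_minReps] using
    Set.ncard_le_ncard (Set.subset_univ (minReps σ.SameCycle))

theorem cycleCount_one : cycleCount (1 : Perm (Fin n)) = n := by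
  have : minReps (1 : Perm (Fin n)).SameCycle = Set.univ :=
    Set.eq_univ_of_forall fun x y hxy => (sameCycle_one.1 hxy).le
  simp [cycleCount_eq_ncard_minReps, this]

theorem sameCycle_finRotate (x y : Fin n) : (finRotate n).SameCycle x y := by
  rcases le_or_gt n 1 with hn | hn
  · rw [Fin.ext (by omega : (x : ℕ) = y)]
  · have hmem (z : Fin n) : finRotate n z ≠ z :=
      mem_support.1 (support_finRotate_of_le hn ▸ Finset.mem_univ z)
    exact (isCycle_finRotate_of_le hn).sameCycle (hmem x) (hmem y)

theorem cycleCount_finRotate [NeZero n] : cycleCount (finRotate n) = 1 := by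
  have : minReps (finRotate n).SameCycle = {0} := Set.eq_singleton_iff_unique_mem.2
    ⟨fun y _ => Fin.zero_le y,
      fun x hx => le_antisymm (hx 0 (sameCycle_finRotate x 0)) (Fin.zero_le x)⟩
  rw [cycleCount_eq_ncard_minReps, this, Set.ncard_singleton]

theorem cycleCount_le_cycleCount_mul_swap_add_one (σ : Perm (Fin n)) (a b : Fin n) :
    cycleCount σ ≤ cycleCount (σ * swap a b) + 1 :=
  (ncard_minReps_le_joinPair (SameCycle.equivalence σ) a b).trans
    (Nat.add_le_add_right (ncard_minReps_le fun _ _ => sameCycle_mul_swap_imp_joinPair) 1)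

theorem isMerge_of_cycleCount {a b : Fin n} (h : cycleCount (σ * swap a b) + 1 = cycleCount σ) :
    IsMerge σ a b := by
  have hsc := SameCycle.equivalence σ
  have hnab : ¬ σ.SameCycle a b := fun hab => by
    have := ncard_minReps_le fun x y hxy =>
      (joinPair_iff_of_rel hsc hab).1
        (sameCycle_mul_swap_imp_joinPair (σ := σ) (x := x) (y := y) hxy)
    rw [← cycleCount_eq_ncard_minReps, ← cycleCount_eq_ncard_minReps] at this
    omega
  refine ⟨hnab, fun x y => ⟨sameCycle_mul_swap_imp_joinPair, fun hxy => ?_⟩⟩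
  by_contra hn
  have hlt := ncard_minReps_lt (SameCycle.equivalence _) (hsc.joinPair a b)
    (fun _ _ => sameCycle_mul_swap_imp_joinPair) hxy hn
  have hle := ncard_minReps_le_joinPair hsc a b
  rw [← cycleCount_eq_ncard_minReps] at hlt hle
  omega

theorem cycleCount_lt_of_apply_ne {x : Fin n} (hx : σ x ≠ x) : cycleCount σ < n := by
  have := ncard_minReps_lt (SameCycle.equivalence 1) (SameCycle.equivalence σ)
    (fun x y h => (sameCycle_one.1 h) ▸ SameCycle.refl σ x)
    (sameCycle_apply_right.2 (SameCycle.refl σ x)) (fun h => hx (sameCycle_one.1 h).symm)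
  rwa [← cycleCount_eq_ncard_minReps, ← cycleCount_eq_ncard_minReps, cycleCount_one] at this

/-- Multiplying by `swap x (σ⁻¹ x)` turns `x` into a fixed point, splitting the cycle of `x`. -/
theorem cycleCount_mul_swap_inv_apply {x : Fin n} (hx : σ x ≠ x) :
    cycleCount (σ * swap x (σ⁻¹ x)) = cycleCount σ + 1 := by
  set σ₁ := σ * swap x (σ⁻¹ x)
  have hσ : σ₁ * swap x (σ⁻¹ x) = σ := by simp [σ₁, mul_assoc]
  have hxy : σ.SameCycle x (σ⁻¹ x) := by simp [SameCycle.refl]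
  have hfix : σ₁ x = x := by simp [σ₁]
  have hle := cycleCount_le_cycleCount_mul_swap_add_one σ₁ x (σ⁻¹ x)
  have hlt := ncard_minReps_lt (SameCycle.equivalence σ₁) (SameCycle.equivalence σ)
    (fun _ _ h => (joinPair_iff_of_rel (SameCycle.equivalence σ) hxy).1
      (sameCycle_mul_swap_imp_joinPair h)) hxy
    (fun h => hx (by simpa using congrArg σ (h.eq_of_left hfix)))
  rw [hσ] at hle
  rw [← cycleCount_eq_ncard_minReps, ← cycleCount_eq_ncard_minReps] at hlt
  omega

theorem exists_list_isSwap_prod_eq (σ : Perm (Fin n)) : ∃ L : List (Perm (Fin n)),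
    (∀ τ ∈ L, τ.IsSwap) ∧ cycleCount σ + L.length = n ∧ L.prod = σ := by
  induction hd : n - cycleCount σ generalizing σ with
  | zero =>
    have hσ : σ = 1 := Equiv.ext fun x => by_contra fun hx => by
      have := cycleCount_lt_of_apply_ne hx
      omega
    exact ⟨[], by simp, by simp [hσ, cycleCount_one], by simp [hσ]⟩
  | succ d ih =>
    obtain ⟨x, hx⟩ : ∃ x, σ x ≠ x := by
      by_contra! h
      rw [show σ = 1 from Equiv.ext h, cycleCount_one] at hd
      omega
    have hcount := cycleCount_mul_swap_inv_apply hx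
    obtain ⟨L, hL, hlen, hprod⟩ := ih (σ * swap x (σ⁻¹ x)) (by omega)
    refine ⟨L ++ [swap x (σ⁻¹ x)], ?_, ?_, by simp [hprod, mul_assoc]⟩
    · simp only [List.mem_append, List.mem_singleton]
      rintro τ (hτ | rfl)
      exacts [hL τ hτ, ⟨x, σ⁻¹ x, fun h => hx (by simpa using congrArg σ h), rfl⟩]
    · rw [List.length_append, List.length_singleton]
      omega

end CycleCount

section Cyclic

variable {n : ℕ}

def cyclicDist (y z : Fin n) : ℕ := (z - y : Fin n)

theorem cyclicDist_of_le {y z : Fin n} (h : y ≤ z) : cyclicDist y z = z - y :=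
  Fin.coe_sub_iff_le.2 h

theorem cyclicDist_of_lt {y z : Fin n} (h : z < y) : cyclicDist y z = n + z - y :=
  Fin.coe_sub_iff_lt.2 h

theorem cyclicDist_eq (y z : Fin n) :
    cyclicDist y z = if y ≤ z then (z : ℕ) - y else n + z - y := by
  split_ifs with h
  exacts [cyclicDist_of_le h, cyclicDist_of_lt (not_le.1 h)]

theorem cyclicDist_pos {y z : Fin n} (h : z ≠ y) : 0 < cyclicDist y z := by
  rw [cyclicDist_eq]
  split_ifs <;> omega

theorem cyclicDist_injective (y : Fin n) : Function.Injective (cyclicDist y) := by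
  intro z w h
  simp only [cyclicDist_eq] at h
  split_ifs at h <;> omega

theorem cyclicDist_lt_of_lt {a p z : Fin n} (hzp : z ≠ p)
    (h : cyclicDist p z < cyclicDist p a) : cyclicDist a p < cyclicDist a z := by
  simp only [cyclicDist_eq] at h ⊢
  split_ifs at h ⊢ <;> omega

theorem lt_and_le_of_cyclicDist_le {u w q : Fin n} (huq : u < q) (hwu : w ≠ u)
    (h : cyclicDist u w ≤ cyclicDist u q) : u < w ∧ w ≤ q := by
  simp only [cyclicDist_eq] at h
  split_ifs at h <;> omega

def CyclesIncreasing (σ : Perm (Fin n)) : Prop :=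
  ∀ y z, σ.SameCycle y z → z ≠ y → cyclicDist y (σ y) ≤ cyclicDist y z

def Noncrossing (σ : Perm (Fin n)) : Prop :=
  ∀ p q r s : Fin n, p < q → q < r → r < s → σ.SameCycle p r → σ.SameCycle q s →
    σ.SameCycle p q

theorem cyclesIncreasing_finRotate : CyclesIncreasing (finRotate n) := by
  intro y z _ hzy
  obtain ⟨m, rfl⟩ : ∃ m, n = m + 1 := ⟨n - 1, by omega⟩
  rw [finRotate_apply, cyclicDist, add_sub_cancel_left, Fin.val_one']
  exact (Nat.mod_le _ _).trans (cyclicDist_pos hzy)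

theorem noncrossing_finRotate : Noncrossing (finRotate n) :=
  fun p q _ _ _ _ _ _ _ => sameCycle_finRotate p q

end Cyclic

namespace IsMerge

variable {n : ℕ} {σ : Perm (Fin n)} {a b : Fin n}

theorem cyclicDist_apply_left_le (h : IsMerge σ a b) (h' : CyclesIncreasing (σ * swap a b))
    {z : Fin n} (hz : σ.SameCycle a z) (hza : z ≠ a) :
    cyclicDist a (σ a) ≤ cyclicDist a z := by
  classical
  obtain ⟨w, hw, hmin⟩ := Finset.exists_min_image
    (Finset.univ.filter fun w => σ.SameCycle a w ∧ w ≠ a) (cyclicDist a)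
    ⟨z, by simp [hz, hza]⟩
  simp only [Finset.mem_filter, Finset.mem_univ, true_and, and_imp] at hw hmin
  obtain ⟨hw, hwa⟩ := hw
  -- the predecessor `p` of the closest `w` must be `a`: otherwise `σ * swap a b` agrees with `σ`
  -- at `p`, and its monotonicity at `p` would put `p` strictly between `a` and `w`
  suffices hp : σ⁻¹ w = a by
    rw [show σ a = w by simp [← hp]]
    exact hmin z hz hza
  by_contra hpa
  set p := σ⁻¹ w
  have hap : σ.SameCycle a p := hw.trans (by simp [p, SameCycle.refl])
  have hpb : p ≠ b := fun e => h.1 (e ▸ hap)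
  have hσp' : σ p = w := by simp [p]
  have hσp : (σ * swap a b) p = w := by rw [mul_apply, swap_apply_of_ne_of_ne hpa hpb, hσp']
  have hwp : w ≠ p := fun e => hpa (hap.symm.eq_of_left (hσp'.trans e))
  have hle := h' p a (h.sameCycle_mul_swap hap.symm) (Ne.symm hpa)
  rw [hσp] at hle
  have hlt := lt_of_le_of_ne hle fun e => hwa (cyclicDist_injective p e)
  exact (cyclicDist_lt_of_lt hwp hlt).not_ge (hmin p hap hpa)

theorem cyclesIncreasing (h : IsMerge σ a b) (h' : CyclesIncreasing (σ * swap a b)) :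
    CyclesIncreasing σ := by
  intro y z hyz hzy
  rcases eq_or_ne y a with rfl | hya
  · exact h.cyclicDist_apply_left_le h' hyz hzy
  rcases eq_or_ne y b with rfl | hyb
  · exact h.symm.cyclicDist_apply_left_le (swap_comm a y ▸ h') hyz hzy
  have := h' y z (h.sameCycle_mul_swap hyz) hzy
  rwa [mul_apply, swap_apply_of_ne_of_ne hya hyb] at this

/-- Going up from a point `p` of the cycle of `a` to a point `q` of the cycle of `b`, one
crosses from the first cycle into the second at `a`: the last point of the cycle of `a` before
`q` is sent into the cycle of `b` by `σ * swap a b`, which is only possible at `a`. -/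
theorem le_and_lt_of_lt (h : IsMerge σ a b) (h' : CyclesIncreasing (σ * swap a b)) {p q : Fin n}
    (hpq : p < q) (hpa : σ.SameCycle p a) (hqb : σ.SameCycle q b) : p ≤ a ∧ a < q := by
  classical
  obtain ⟨u, hu, hmax⟩ := Finset.exists_max_image
    (Finset.univ.filter fun v => σ.SameCycle v a ∧ p ≤ v ∧ v < q) id
    ⟨p, by simp [hpa, hpq]⟩
  simp only [Finset.mem_filter, Finset.mem_univ, true_and, id, and_imp] at hu hmax
  obtain ⟨hua, hpu, huq⟩ := hu
  suffices hu : u = a by exact hu ▸ ⟨hpu, huq⟩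
  by_contra hua'
  have hub : u ≠ b := fun e => h.1 (e ▸ hua.symm)
  have huq' : (σ * swap a b).SameCycle u q := (h.2 u q).2 (Or.inr ⟨Or.inl hua, Or.inr hqb⟩)
  have hfix : (σ * swap a b) u ≠ u := fun e => huq.ne (huq'.eq_of_left e)
  have hσu : (σ * swap a b) u = σ u := by rw [mul_apply, swap_apply_of_ne_of_ne hua' hub]
  obtain ⟨hlt, hle⟩ := lt_and_le_of_cyclicDist_le huq hfix (h' u q huq' huq.ne')
  rw [hσu] at hlt hle
  have hσua : σ.SameCycle (σ u) a := sameCycle_apply_left.2 hua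
  have hne : σ u ≠ q := fun e => h.1 ((e ▸ hσua).symm.trans hqb)
  exact (hmax _ hσua (hpu.trans hlt.le) (lt_of_le_of_ne hle hne)).not_gt hlt

theorem noncrossing (h : IsMerge σ a b) (h' : CyclesIncreasing (σ * swap a b))
    (hnc : Noncrossing (σ * swap a b)) : Noncrossing σ := by
  intro p q r s hpq hqr hrs hpr hqs
  have hcross : ∀ {a b : Fin n}, IsMerge σ a b → CyclesIncreasing (σ * swap a b) →
      σ.SameCycle p a → σ.SameCycle q b → False := fun h h' hpa hqb => by
    have h₁ := h.le_and_lt_of_lt h' hpq hpa hqb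
    have h₂ := h.le_and_lt_of_lt h' hrs (hpr.symm.trans hpa) (hqs.symm.trans hqb)
    exact absurd (h₁.2.trans hqr) h₂.1.not_gt
  rcases (h.2 p q).1 (hnc p q r s hpq hqr hrs (h.sameCycle_mul_swap hpr)
    (h.sameCycle_mul_swap hqs)) with hpq' | ⟨hpa | hpb, hqa | hqb⟩
  · exact hpq'
  · exact hpa.trans hqa.symm
  · exact (hcross h h' hpa hqb).elim
  · exact (hcross h.symm (swap_comm a b ▸ h') hpb hqa).elim
  · exact hpb.trans hqb.symm

theorem apply_eq_self {x y : Fin n} (h : IsMerge σ a b)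
    (hab : a < b) (hσ : CyclesIncreasing σ) (hσ' : CyclesIncreasing (σ * swap a b))
    (hnc : Noncrossing (σ * swap a b)) (hx : (x : ℕ) = a + 1) (hyx : y < x)
    (hy : σ.SameCycle y x) : σ x = x := by
  by_contra hσx
  have hxa : x ≠ a := by omega
  -- `x = a + 1` is the first point after `a`: once `x` joins the cycle of `a`, it follows `a`
  have hσb : σ.SameCycle x a ∨ σ.SameCycle x b → σ b = x := fun hxAB => by
    have hax : (σ * swap a b).SameCycle a x := (h.2 a x).2 (Or.inr ⟨Or.inl (.refl _ _), hxAB⟩)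
    have hle := hσ' a x hax hxa
    have hpos := cyclicDist_pos fun e => hxa (hax.eq_of_left e).symm
    rw [cyclicDist_of_le (by omega : a ≤ x), hx] at hle
    have : (σ * swap a b) a = x :=
      cyclicDist_injective a (by rw [cyclicDist_of_le (by omega : a ≤ x), hx]; omega)
    simpa using this
  have hbx : σ.SameCycle b (σ b) := sameCycle_apply_right.2 (.refl _ _)
  by_cases hxa' : σ.SameCycle x a
  · exact h.1 (hxa'.symm.trans (hσb (Or.inl hxa') ▸ hbx.symm))
  by_cases hxb : σ.SameCycle x b
  · have hσbx := hσb (Or.inr hxb)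
    have hxb' : x < b := lt_of_le_of_ne (by omega) fun e => hσx (e ▸ hσbx)
    have := hσ b y (hxb.symm.trans hy.symm) (by omega)
    rw [hσbx, cyclicDist_of_lt hxb', cyclicDist_of_lt (hyx.trans hxb')] at this
    omega
  · have hya : y < a := lt_of_le_of_ne (by omega) fun e => hxa' (e ▸ hy.symm)
    have hxb' : x < b := lt_of_le_of_ne (by omega) fun e => hxb (e ▸ .refl _ _)
    have hab' : (σ * swap a b).SameCycle a b := by
      simpa using h.sameCycle_swap_apply a
    rcases (h.2 y a).1 (hnc y a x b hya (by omega) hxb' (h.sameCycle_mul_swap hy) hab')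
      with hya' | ⟨hya' | hyb, -⟩
    · exact hxa' (hy.symm.trans hya')
    · exact hxa' (hy.symm.trans hya')
    · exact hxb (hy.symm.trans hyb)

end IsMerge

section Chain

variable {n : ℕ} {L : List (Perm (Fin n))}

theorem cycleCount_prod_take_add (hL : ∀ τ ∈ L, τ.IsSwap)
    (hcount : cycleCount L.prod + L.length = n) {m : ℕ} (hm : m ≤ L.length) :
    cycleCount (L.take m).prod + m = n := by
  have hmono : Monotone fun m => cycleCount (L.take m).prod + m := by
    refine monotone_nat_of_le_succ fun m => ?_
    rcases lt_or_ge m L.length with hm | hm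
    · obtain ⟨a, b, -, hτ⟩ := hL _ (List.getElem_mem hm)
      have := cycleCount_le_cycleCount_mul_swap_add_one (L.take m).prod a b
      rw [List.prod_take_succ _ _ hm, hτ]
      omega
    · rw [List.take_of_length_le hm, List.take_of_length_le (by omega)]
      omega
  have h0 := hmono (Nat.zero_le m)
  have hlen := hmono hm
  simp only [List.take_zero, List.prod_nil, cycleCount_one, List.take_length] at h0 hlen
  omega

theorem isMerge_prod_take (hL : ∀ τ ∈ L, τ.IsSwap) (hcount : cycleCount L.prod + L.length = n)
    {m : ℕ} (hm : m < L.length) {a b : Fin n} (hτ : L[m] = swap a b) :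
    IsMerge (L.take m).prod a b := by
  have h := cycleCount_prod_take_add hL hcount hm.le
  have h' := cycleCount_prod_take_add hL hcount (Nat.succ_le_of_lt hm)
  rw [List.prod_take_succ _ _ hm, hτ] at h'
  exact isMerge_of_cycleCount (by omega)

theorem sameCycle_prod_take_mono (hL : ∀ τ ∈ L, τ.IsSwap)
    (hcount : cycleCount L.prod + L.length = n) {m m' : ℕ} (hmm' : m ≤ m')
    (hm' : m' ≤ L.length) {x y : Fin n} (h : (L.take m).prod.SameCycle x y) :
    (L.take m').prod.SameCycle x y := by
  induction m', hmm' using Nat.le_induction with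
  | base => exact h
  | succ m' _ ih =>
    obtain ⟨a, b, -, hτ⟩ := hL _ (List.getElem_mem hm')
    rw [List.prod_take_succ _ _ hm', hτ]
    exact (isMerge_prod_take hL hcount hm' hτ).sameCycle_mul_swap (ih (by omega))

theorem sameCycle_prod_take_succ_apply (hL : ∀ τ ∈ L, τ.IsSwap)
    (hcount : cycleCount L.prod + L.length = n) {t : ℕ} (ht : t < L.length) (x : Fin n) :
    (L.take (t + 1)).prod.SameCycle x (L[t] x) := by
  obtain ⟨a, b, -, hτ⟩ := hL _ (List.getElem_mem ht)
  rw [List.prod_take_succ _ _ ht, hτ]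
  exact (isMerge_prod_take hL hcount ht hτ).sameCycle_swap_apply x

theorem cyclesIncreasing_noncrossing_prod_take (hL : ∀ τ ∈ L, τ.IsSwap)
    (hcount : cycleCount L.prod + L.length = n)
    (hprod : CyclesIncreasing L.prod ∧ Noncrossing L.prod) {m : ℕ} (hm : m ≤ L.length) :
    CyclesIncreasing (L.take m).prod ∧ Noncrossing (L.take m).prod := by
  refine Nat.decreasingInduction (motive := fun m _ =>
    CyclesIncreasing (L.take m).prod ∧ Noncrossing (L.take m).prod) (fun m hm ih => ?_)
    (by rwa [List.take_length]) hm
  obtain ⟨a, b, -, hτ⟩ := hL _ (List.getElem_mem hm)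
  rw [List.prod_take_succ _ _ hm, hτ] at ih
  have h := isMerge_prod_take hL hcount hm hτ
  exact ⟨h.cyclesIncreasing ih.1, h.noncrossing ih.1 ih.2⟩

end Chain

theorem prod_take_apply_eq_self {n : ℕ} {L : List (Perm (Fin n))} (hL : ∀ τ ∈ L, τ.IsSwap)
    (hlen : L.length + 1 = n) (hprod : L.prod = finRotate n) {m : ℕ} (hm : m < L.length)
    {a b x : Fin n} (hτ : L[m] = swap a b) (hab : a < b) (hx : (x : ℕ) = a + 1)
    (hdown : ∀ τ ∈ L.take m, τ x ≠ x → τ x < x) : (L.take m).prod x = x := by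
  have : NeZero n := ⟨by omega⟩
  have hcount : cycleCount L.prod + L.length = n := by
    rw [hprod, cycleCount_finRotate]
    omega
  have hgood {m' : ℕ} (hm' : m' ≤ L.length) := cyclesIncreasing_noncrossing_prod_take hL hcount
    (hprod ▸ ⟨cyclesIncreasing_finRotate, noncrossing_finRotate⟩) hm'
  obtain ⟨hσ', hnc⟩ := hgood (Nat.succ_le_of_lt hm)
  rw [List.prod_take_succ _ _ hm, hτ] at hσ' hnc
  by_contra hσx
  obtain ⟨τ, hτmem, hτx⟩ := exists_mem_apply_ne_of_prod_apply_ne hσx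
  obtain ⟨t, ht, rfl⟩ := List.mem_take_iff_getElem.1 hτmem
  have hy := sameCycle_prod_take_mono (m := t + 1) hL hcount (by omega) hm.le
    (sameCycle_prod_take_succ_apply hL hcount (by omega) x)
  exact hσx ((isMerge_prod_take hL hcount hm hτ).apply_eq_self hab (hgood hm.le).1 hσ' hnc hx
    (hdown _ hτmem hτx) hy.symm)

theorem exists_append_prod_eq_finRotate {n : ℕ} [NeZero n] {L₀ : List (Perm (Fin n))}
    (hnorm : normPerm L₀.prod = L₀.length) (hprec : precLe L₀.prod (finRotate n)) :
    ∃ L₂ : List (Perm (Fin n)), (∀ τ ∈ L₂, τ.IsSwap) ∧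
      (L₀ ++ L₂).length + 1 = n ∧ (L₀ ++ L₂).prod = finRotate n := by
  obtain ⟨L₂, hL₂, hlen, hprod⟩ := exists_list_isSwap_prod_eq (L₀.prod⁻¹ * finRotate n)
  refine ⟨L₂, hL₂, ?_, by rw [List.prod_append, hprod, mul_inv_cancel_left]⟩
  unfold normPerm at hnorm
  unfold precLe normPerm at hprec
  rw [cycleCount_finRotate] at hprec
  have := cycleCount_le L₀.prod
  have := NeZero.pos n
  rw [List.length_append]
  omega

/-- If γ = ((i₁ j₁),…,(i_k j_k)) ∈ Σ_n(k), l ∈ {1,…,k} and i_l + 1 ∉ {i₁,…,i_{l−1}}, then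
i_l + 1 is a fixed point of γ_{l−1}. -/
theorem stmt6 (n k : ℕ) (i j : Fin k → Fin n) (hij : ∀ l, i l < j l)
    (hγ : (fun l => Equiv.swap (i l) (j l)) ∈ SigmaSet n k) (l : Fin k)
    (hnot : ∀ m : Fin k, m < l → (i m : ℕ) ≠ (i l : ℕ) + 1)
    (x : Fin n) (hx : (x : ℕ) = (i l : ℕ) + 1) :
    gammaP (fun m => Equiv.swap (i m) (j m)) (l : ℕ) x = x := by
  obtain ⟨hswap, hnorm, hprec⟩ := hγ
  have : NeZero n := NeZero.of_pos x.pos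
  set τ : Fin k → Perm (Fin n) := fun m => swap (i m) (j m)
  obtain ⟨L₂, hL₂, hlen, hprod⟩ :=
    exists_append_prod_eq_finRotate (by simpa using hnorm) hprec
  have hl : (l : ℕ) < (List.ofFn τ).length := by simp
  have htake : (List.ofFn τ ++ L₂).take l = (List.ofFn τ).take l :=
    List.take_append_of_le_length hl.le
  rw [gammaP, ← htake]
  refine prod_take_apply_eq_self ?_ hlen hprod
    (hl.trans_le (by rw [List.length_append]; omega))
    (by simp [List.getElem_append_left hl, τ]) (hij l) hx ?_
  · simp only [List.mem_append, List.mem_ofFn]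
    rintro _ (⟨m, rfl⟩ | hτ)
    exacts [hswap m, hL₂ _ hτ]
  · rw [htake]
    intro σ hσ hσx
    obtain ⟨m, hm, rfl⟩ := List.mem_take_iff_getElem.1 hσ
    simp only [List.getElem_ofFn, τ] at hσx ⊢
    obtain ⟨-, hxm | hxm⟩ := swap_apply_ne_self_iff.1 hσx
    · simp only [List.length_ofFn] at hm
      exact absurd (hxm ▸ hx) (hnot _ (Fin.mk_lt_of_lt_val (by omega)))
    · rw [hxm, swap_apply_right]
      exact hij _
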